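/- Let V be a d-varifold in ℝⁿ with ‖V‖ d-Ahlfors regular with constant C₀, and let ε, γ ∈ (0,1) with γ ≤ (8(1 + C₀^{2/d}))⁻¹. Define the approximate mean curvature H_ε(z, V) = −(δV * ρ_ε)(z) / (‖V‖ * ξ_ε)(z). Then for all z at distance at most γε from supp ‖V‖, |H_ε(z, V)| ≤ β⁻¹ C₀² 2^{3d+1} ‖ρ'‖_∞ · ε⁻¹, where β = min { ξ(s) : s ∈ [C₀^{-2/d}/4, 1/2] }. -/

import Mathlib

/-!
Let `x ∈ supp ‖V‖` with `|z - x| ≤ γε`. Since the tangent maps of `V` are orthogonal projections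
and `∇ρ_ε` is bounded by `ε⁻ⁿ⁻¹ ‖ρ'‖_∞` and vanishes outside `B(0, ε)`, the numerator is at most
`ε⁻ⁿ⁻¹ ‖ρ'‖_∞ ‖V‖(B(z, ε)) ≤ ε⁻ⁿ⁻¹ ‖ρ'‖_∞ C₀ (2ε)^d`. The denominator is at least `ε⁻ⁿ β` times
the mass of the annulus `B(z, ε/2) \ B(z, aε)`, `a = C₀^{-2/d}/4`, on which `ξ(|z - y|/ε) ≥ β`.
The annulus contains `B(x, (1/2 - γ)ε) \ B(x, (a + γ)ε)`, and comparing the two Ahlfors bounds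
gives it mass `≥ ε^d / (C₀ 2^{2d+1})`.
-/

open MeasureTheory Metric Set

lemma sub_mul_pow_le_pow_succ_sub_pow_succ {u v : ℝ} (hu : 0 ≤ u) (huv : u ≤ v) (m : ℕ) :
    (v - u) * v ^ m ≤ v ^ (m + 1) - u ^ (m + 1) := by
  have : u * u ^ m ≤ u * v ^ m := by gcongr
  linarith [pow_succ' u m, pow_succ' v m]

lemma one_div_two_pow_le_pow_sub_pow {d : ℕ} (hd : 1 ≤ d) {u v : ℝ} (hu : 0 ≤ u)
    (hv : 1 / 4 ≤ v) (huv : u + 1 / 8 ≤ v) : 1 / 2 ^ (2 * d + 1) ≤ v ^ d - u ^ d := by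
  obtain ⟨m, rfl⟩ := Nat.exists_eq_add_of_le' hd
  calc (1 : ℝ) / 2 ^ (2 * (m + 1) + 1) = 1 / 8 * (1 / 4) ^ m := by
        rw [div_pow, one_pow, show (4 : ℝ) = 2 ^ 2 by norm_num, ← pow_mul]
        field_simp
        ring
    _ ≤ (v - u) * v ^ m := by gcongr <;> linarith
    _ ≤ v ^ (m + 1) - u ^ (m + 1) := sub_mul_pow_le_pow_succ_sub_pow_succ hu (by linarith) m

lemma mul_rpow_neg_two_div_mul_pow {C : ℝ} (hC : 0 < C) {d : ℕ} (hd : d ≠ 0) (t : ℝ) :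
    C * (C ^ (-2 / (d : ℝ)) * t) ^ d = C⁻¹ * t ^ d := by
  have hpow : (C ^ (-2 / (d : ℝ))) ^ d = C ^ (-2 : ℝ) := by
    rw [← Real.rpow_natCast, ← Real.rpow_mul hC.le, div_mul_cancel₀ _ (by exact_mod_cast hd)]
  rw [mul_pow, hpow, Real.rpow_neg hC.le, ← mul_assoc, Real.rpow_two]
  field_simp

section RadialKernel

variable {E : Type*} [NormedAddCommGroup E] [InnerProductSpace ℝ E] [CompleteSpace E]

lemma norm_gradient_radial_le {ρ : ℝ → ℝ} {M : ℝ} (hρ : Differentiable ℝ ρ)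
    (hM : ∀ r, |deriv ρ r| ≤ M) {c ε : ℝ} (hc : 0 ≤ c) (hε : 0 < ε) (w : E) :
    ‖gradient (fun w : E => c * ρ (‖w‖ / ε)) w‖ ≤ c * ε⁻¹ * M := by
  have hM0 : 0 ≤ M := (abs_nonneg _).trans (hM 0)
  rw [gradient, LinearIsometryEquiv.norm_map]
  refine norm_fderiv_le_of_lip' ℝ (by positivity) (Filter.Eventually.of_forall fun v => ?_)
  have hρlip : ‖ρ (‖v‖ / ε) - ρ (‖w‖ / ε)‖ ≤ M * ‖‖v‖ / ε - ‖w‖ / ε‖ :=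
    convex_univ.norm_image_sub_le_of_norm_deriv_le (fun r _ => hρ r) (fun r _ => hM r)
      (mem_univ _) (mem_univ _)
  have hquot : ‖‖v‖ / ε - ‖w‖ / ε‖ ≤ ε⁻¹ * ‖v - w‖ := by
    rw [← sub_div, norm_div, Real.norm_of_nonneg hε.le, div_eq_inv_mul]
    gcongr
    exact abs_norm_sub_norm_le v w
  calc ‖c * ρ (‖v‖ / ε) - c * ρ (‖w‖ / ε)‖ = c * ‖ρ (‖v‖ / ε) - ρ (‖w‖ / ε)‖ := by
        rw [← mul_sub, norm_mul, Real.norm_of_nonneg hc]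
    _ ≤ c * (M * (ε⁻¹ * ‖v - w‖)) := by gcongr; exact hρlip.trans (by gcongr)
    _ = c * ε⁻¹ * M * ‖v - w‖ := by ring

lemma gradient_radial_eq_zero {ρ : ℝ → ℝ} (hρ : Function.support ρ ⊆ Iic 1) {c ε : ℝ}
    (hε : 0 < ε) {w : E} (hw : ε < ‖w‖) :
    gradient (fun w : E => c * ρ (‖w‖ / ε)) w = 0 := by
  have hzero : (fun w : E => c * ρ (‖w‖ / ε)) =ᶠ[nhds w] fun _ => 0 := by
    filter_upwards [(isOpen_lt continuous_const continuous_norm).mem_nhds hw] with v hv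
    rw [Function.notMem_support.1 fun h => (one_lt_div hε).2 hv |>.not_ge (hρ h), mul_zero]
  rw [gradient, hzero.fderiv_eq, fderiv_const_apply, map_zero]

end RadialKernel

section Varifold

variable {E : Type*} [NormedAddCommGroup E] [NormedSpace ℝ E] [MeasurableSpace E] [BorelSpace E]

lemma norm_integral_apply_le {V : Measure (E × (E →L[ℝ] E))} [IsFiniteMeasure V]
    (hV : ∀ᵐ p ∂V, ∀ v, ‖p.2 v‖ ≤ ‖v‖) {g : E → E} {K ε : ℝ} (hK : ∀ w, ‖g w‖ ≤ K)
    (hg : ∀ w, ε < ‖w‖ → g w = 0) (z : E) :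
    ‖∫ p, p.2 (g (z - p.1)) ∂V‖ ≤ K * (V.map Prod.fst).real (closedBall z ε) := by
  have hball : MeasurableSet (Prod.fst ⁻¹' closedBall z ε : Set (E × (E →L[ℝ] E))) :=
    measurableSet_closedBall.preimage measurable_fst
  have hpointwise : ∀ᵐ p : E × (E →L[ℝ] E) ∂V,
      ‖p.2 (g (z - p.1))‖ ≤ (Prod.fst ⁻¹' closedBall z ε).indicator (fun _ => K) p := by
    filter_upwards [hV] with p hp
    by_cases hmem : p.1 ∈ closedBall z ε
    · rw [indicator_of_mem (mem_preimage.2 hmem)]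
      exact (hp _).trans (hK _)
    · rw [indicator_of_notMem (mt mem_preimage.1 hmem), hg, map_zero, norm_zero]
      rwa [mem_closedBall, not_le, dist_comm, dist_eq_norm] at hmem
  calc ‖∫ p, p.2 (g (z - p.1)) ∂V‖ ≤ ∫ p, ‖p.2 (g (z - p.1))‖ ∂V :=
        norm_integral_le_integral_norm _
    _ ≤ ∫ p, (Prod.fst ⁻¹' closedBall z ε).indicator (fun _ => K) p ∂V :=
        integral_mono_of_nonneg (.of_forall fun _ => norm_nonneg _)
          ((integrable_const K).indicator hball) hpointwise
    _ = K * (V.map Prod.fst).real (closedBall z ε) := by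
        rw [integral_indicator_const _ hball, smul_eq_mul, mul_comm, map_measureReal_apply
          measurable_fst measurableSet_closedBall]

end Varifold

section MetricMeasure

variable {X : Type*} [PseudoMetricSpace X] [MeasurableSpace X]

lemma mul_measureReal_annulus_le_integral [OpensMeasurableSpace X] (μ : Measure X)
    [IsFiniteMeasure μ] {ξ : ℝ → ℝ} (hξ : Continuous ξ) (hξc : HasCompactSupport ξ)
    (hξ0 : ∀ r, 0 ≤ ξ r) {a b β c ε : ℝ} (hβ : ∀ s ∈ Icc a b, β ≤ ξ s) (hc : 0 ≤ c)
    (hε : 0 < ε) (z : X) :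
    c * β * μ.real (closedBall z (b * ε) \ ball z (a * ε)) ≤ ∫ y, c * ξ (dist z y / ε) ∂μ := by
  set A := closedBall z (b * ε) \ ball z (a * ε)
  obtain ⟨B, hB⟩ := hξ.bddAbove_range_of_hasCompactSupport hξc
  have hint : Integrable (fun y => c * ξ (dist z y / ε)) μ := by
    refine .of_bound (by fun_prop) (c * B) (.of_forall fun y => ?_)
    rw [Real.norm_of_nonneg (mul_nonneg hc (hξ0 _))]
    exact mul_le_mul_of_nonneg_left (hB (mem_range_self _)) hc
  have hA : ∀ y ∈ A, c * β ≤ c * ξ (dist z y / ε) := by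
    rintro y ⟨hy_le, hy_ge⟩
    rw [mem_closedBall, dist_comm] at hy_le
    rw [mem_ball, not_lt, dist_comm] at hy_ge
    exact mul_le_mul_of_nonneg_left
      (hβ _ ⟨(le_div_iff₀ hε).2 hy_ge, (div_le_iff₀ hε).2 hy_le⟩) hc
  calc c * β * μ.real A ≤ ∫ y in A, c * ξ (dist z y / ε) ∂μ :=
        setIntegral_ge_of_const_le_real (measurableSet_closedBall.diff measurableSet_ball)
          (measure_ne_top μ A) hA hint.integrableOn
    _ ≤ ∫ y, c * ξ (dist z y / ε) ∂μ :=
        setIntegral_le_integral hint (.of_forall fun y => mul_nonneg hc (hξ0 _))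

lemma measureReal_ball_sub_measureReal_ball_le_annulus (μ : Measure X) [IsFiniteMeasure μ]
    {x z : X} {r R δ : ℝ} (hzx : dist z x ≤ δ) :
    μ.real (ball x (R - δ)) - μ.real (ball x (r + δ)) ≤ μ.real (closedBall z R \ ball z r) := by
  have houter : ball x (R - δ) ⊆ closedBall z R := fun y hy => by
    rw [mem_ball] at hy
    rw [mem_closedBall]
    linarith [dist_triangle y x z, dist_comm x z]
  have hinner : ball z r ⊆ ball x (r + δ) := fun y hy => by
    rw [mem_ball] at hy ⊢
    linarith [dist_triangle y z x]
  calc μ.real (ball x (R - δ)) - μ.real (ball x (r + δ))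
      ≤ μ.real (closedBall z R) - μ.real (ball z r) :=
        sub_le_sub (measureReal_mono houter) (measureReal_mono hinner)
    _ ≤ μ.real (closedBall z R \ ball z r) := le_measureReal_sdiff

def IsAhlforsRegularAt (μ : Measure X) (d : ℕ) (C R : ℝ) (x : X) : Prop :=
  ∀ r : ℝ, 0 < r → r ≤ R → C⁻¹ * r ^ d ≤ μ.real (ball x r) ∧ μ.real (ball x r) ≤ C * r ^ d


variable {μ : Measure X} {d : ℕ} {C R : ℝ} {x : X}

lemma IsAhlforsRegularAt.measureReal_closedBall_le (h : IsAhlforsRegularAt μ d C R x)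
    [IsFiniteMeasure μ] {z : X} {ε : ℝ} (hε : 0 < ε) (hεR : 2 * ε ≤ R) (hzx : dist z x < ε) :
    μ.real (closedBall z ε) ≤ C * (2 * ε) ^ d := by
  refine (measureReal_mono fun y hy => ?_).trans (h (2 * ε) (by positivity) hεR).2
  rw [mem_closedBall] at hy
  rw [mem_ball]
  linarith [dist_triangle y z x]

lemma IsAhlforsRegularAt.measureReal_annulus_ge (h : IsAhlforsRegularAt μ d C R x)
    [IsFiniteMeasure μ] (hd : 1 ≤ d) (hC : 1 < C) {γ ε : ℝ} (hγ0 : 0 ≤ γ)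
    (hγ : γ ≤ (8 * (1 + C ^ (2 / (d : ℝ))))⁻¹) (hε : 0 < ε) (hεR : ε / 2 ≤ R) {z : X}
    (hzx : dist z x ≤ γ * ε) :
    ε ^ d / (C * 2 ^ (2 * d + 1)) ≤
      μ.real (closedBall z (1 / 2 * ε) \ ball z (C ^ (-2 / (d : ℝ)) / 4 * ε)) := by
  set c := C ^ (2 / (d : ℝ))
  have hc : 1 ≤ c := Real.one_le_rpow hC.le (by positivity)
  have hinv : C ^ (-2 / (d : ℝ)) = c⁻¹ := by rw [neg_div, Real.rpow_neg (by linarith)]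
  have hγc : γ * (1 + c) ≤ 1 / 8 := by
    have h8 : (0 : ℝ) < 8 * (1 + c) := by positivity
    have := mul_le_mul_of_nonneg_right hγ h8.le
    rw [inv_mul_cancel₀ h8.ne'] at this
    linarith
  have hγ16 : γ ≤ 1 / 16 := by nlinarith [mul_le_mul_of_nonneg_left hc hγ0]
  have ha : C ^ (-2 / (d : ℝ)) / 4 ≤ 1 / 4 := by
    rw [hinv]; linarith [inv_le_one_of_one_le₀ hc]
  -- the choice of the inner radius makes both Ahlfors bounds carry the factor `C⁻¹`
  have hradius :
      (C ^ (-2 / (d : ℝ)) / 4 + γ) * ε = C ^ (-2 / (d : ℝ)) * ((1 / 4 + γ * c) * ε) := by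
    rw [hinv]; field_simp
  have hlow := (h ((1 / 2 - γ) * ε) (by nlinarith) (by nlinarith)).1
  have hup := (h ((C ^ (-2 / (d : ℝ)) / 4 + γ) * ε) (by positivity) (by nlinarith)).2
  rw [hradius, mul_rpow_neg_two_div_mul_pow (by linarith) (by omega)] at hup
  have hann := measureReal_ball_sub_measureReal_ball_le_annulus μ (R := 1 / 2 * ε)
    (r := C ^ (-2 / (d : ℝ)) / 4 * ε) hzx
  rw [← add_mul, hradius, ← sub_mul] at hann
  have hpow := one_div_two_pow_le_pow_sub_pow hd (u := 1 / 4 + γ * c) (v := 1 / 2 - γ)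
    (by positivity) (by linarith) (by linarith)
  calc ε ^ d / (C * 2 ^ (2 * d + 1)) = C⁻¹ * ε ^ d * (1 / 2 ^ (2 * d + 1)) := by
        field_simp
    _ ≤ C⁻¹ * ε ^ d * ((1 / 2 - γ) ^ d - (1 / 4 + γ * c) ^ d) := by gcongr
    _ = C⁻¹ * ((1 / 2 - γ) * ε) ^ d - C⁻¹ * ((1 / 4 + γ * c) * ε) ^ d := by
        rw [mul_pow, mul_pow]; ring
    _ ≤ _ := by linarith

end MetricMeasure

theorem stmt4_general {n : ℕ} (d : ℕ) (hd : 1 ≤ d)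
    (V : Measure ((EuclideanSpace ℝ (Fin n)) ×
      ((EuclideanSpace ℝ (Fin n)) →L[ℝ] (EuclideanSpace ℝ (Fin n))))) [IsFiniteMeasure V]
    (hVproj : ∀ᵐ p ∂V, ∃ S : Submodule ℝ (EuclideanSpace ℝ (Fin n)),
      Module.finrank ℝ S = d ∧ ∀ v, p.2 v = S.subtypeL (S.orthogonalProjectionOnto v))
    (C₀ : ℝ) (hC₀ : 1 < C₀)
    (hreg : ∀ x : EuclideanSpace ℝ (Fin n),
      (∀ r > (0:ℝ), 0 < (V.map Prod.fst) (ball x r)) → ∀ r : ℝ, 0 < r → r ≤ 2 →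
        C₀⁻¹ * r ^ d ≤ ((V.map Prod.fst) (ball x r)).toReal ∧
          ((V.map Prod.fst) (ball x r)).toReal ≤ C₀ * r ^ d)
    (ρ : ℝ → ℝ) (hρC : ContDiff ℝ 2 ρ)
    (hρsupp : Function.support ρ ⊆ Icc 0 1)
    (ξ : ℝ → ℝ) (hξC : ContDiff ℝ 1 ξ) (hξ0 : ∀ r, 0 ≤ ξ r)
    (hξsupp : Function.support ξ ⊆ Icc 0 1)
    (β : ℝ) (hβ : β = sInf (ξ '' Icc (C₀ ^ (-2 / (d:ℝ)) / 4) (1/2))) (hβpos : 0 < β)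
    (Mρ' : ℝ) (hMρ' : ∀ r, |deriv ρ r| ≤ Mρ')
    (ε γ : ℝ) (hε : ε ∈ Ioo (0:ℝ) 1) (hγ : γ ∈ Ioo (0:ℝ) 1)
    (hγC : γ ≤ (8 * (1 + C₀ ^ (2 / (d:ℝ))))⁻¹)
    (z : EuclideanSpace ℝ (Fin n))
    (hz : ∃ x : EuclideanSpace ℝ (Fin n),
      (∀ r > (0:ℝ), 0 < (V.map Prod.fst) (ball x r)) ∧ dist z x ≤ γ * ε) :
    ‖-(((∫ y, ε ^ (-(n:ℤ)) * ξ (dist z y / ε) ∂(V.map Prod.fst))⁻¹) •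
        (∫ p, p.2 (gradient
          (fun w : EuclideanSpace ℝ (Fin n) => ε ^ (-(n:ℤ)) * ρ (‖w‖ / ε)) (z - p.1)) ∂V))‖ ≤
      β⁻¹ * C₀ ^ 2 * 2 ^ (3 * d + 1) * Mρ' * ε⁻¹ := by
  obtain ⟨x, hx, hzx⟩ := hz
  obtain ⟨hε0, hε1⟩ := hε
  have hAhlfors : IsAhlforsRegularAt (V.map Prod.fst) d C₀ 2 x := hreg x hx
  have hεn : 0 < ε ^ (-(n : ℤ)) := zpow_pos hε0 _
  have hproj : ∀ᵐ p ∂V, ∀ v, ‖p.2 v‖ ≤ ‖v‖ := by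
    filter_upwards [hVproj] with p hp v
    obtain ⟨S, -, hS⟩ := hp
    rw [hS]
    exact S.norm_starProjection_apply_le v
  have hnum := norm_integral_apply_le hproj
    (norm_gradient_radial_le (hρC.differentiable two_ne_zero) hMρ' hεn.le hε0)
    (fun _ => gradient_radial_eq_zero (hρsupp.trans Icc_subset_Iic_self) hε0) z
  have hball := hAhlfors.measureReal_closedBall_le hε0 (by linarith)
    (hzx.trans_lt (by nlinarith [hγ.2]))
  have hann := hAhlfors.measureReal_annulus_ge hd hC₀ hγ.1.le hγC hε0 (by linarith) hzx
  have hβξ : ∀ s ∈ Icc (C₀ ^ (-2 / (d : ℝ)) / 4) (1 / 2), β ≤ ξ s := fun s hs =>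
    hβ ▸ csInf_le ⟨0, forall_mem_image.2 fun r _ => hξ0 r⟩ (mem_image_of_mem ξ hs)
  have hden := mul_measureReal_annulus_le_integral (V.map Prod.fst) hξC.continuous
    (HasCompactSupport.intro isCompact_Icc fun _ hr => Function.notMem_support.1 (mt (hξsupp ·) hr))
    hξ0 hβξ hεn.le hε0 z
  have hM : 0 ≤ Mρ' := (abs_nonneg _).trans (hMρ' 0)
  have hB : 0 < ε ^ (-(n : ℤ)) * β * (ε ^ d / (C₀ * 2 ^ (2 * d + 1))) := by positivity
  have hBc := (mul_le_mul_of_nonneg_left hann (by positivity)).trans hden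
  rw [norm_neg, norm_smul, norm_inv, Real.norm_of_nonneg (hB.trans_le hBc).le]
  calc _ ≤ (ε ^ (-(n : ℤ)) * β * (ε ^ d / (C₀ * 2 ^ (2 * d + 1))))⁻¹ *
          (ε ^ (-(n : ℤ)) * ε⁻¹ * Mρ' * (C₀ * (2 * ε) ^ d)) :=
        mul_le_mul (inv_anti₀ hB hBc) (hnum.trans (by gcongr)) (norm_nonneg _) (by positivity)
    _ = β⁻¹ * C₀ ^ 2 * 2 ^ (3 * d + 1) * Mρ' * ε⁻¹ := by
        field_simp
        ring

/-- Bound on the approximate mean curvature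
`H_ε(z,V) = −(δV * ρ_ε)(z) / (‖V‖ * ξ_ε)(z)`:
`|H_ε(z,V)| ≤ β⁻¹ C₀² 2^{3d+1} ‖ρ'‖_∞ ε⁻¹` for `z` at distance at most `γε` from
the support of the Ahlfors-regular mass measure `‖V‖`, with
`γ ≤ (8(1 + C₀^{2/d}))⁻¹` and `β = min { ξ(s) : s ∈ [C₀^{-2/d}/4, 1/2] }`. -/
theorem stmt4 {n : ℕ} (d : ℕ) (hd : 1 ≤ d) (hdn : d ≤ n)
    (V : Measure ((EuclideanSpace ℝ (Fin n)) ×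
      ((EuclideanSpace ℝ (Fin n)) →L[ℝ] (EuclideanSpace ℝ (Fin n))))) [IsFiniteMeasure V]
    (hVproj : ∀ᵐ p ∂V, ∃ S : Submodule ℝ (EuclideanSpace ℝ (Fin n)),
      Module.finrank ℝ S = d ∧ ∀ v, p.2 v = S.subtypeL (S.orthogonalProjectionOnto v))
    (C₀ : ℝ) (hC₀ : 1 < C₀)
    (hreg : ∀ x : EuclideanSpace ℝ (Fin n),
      (∀ r > (0:ℝ), 0 < (V.map Prod.fst) (ball x r)) → ∀ r : ℝ, 0 < r → r ≤ 2 →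
        C₀⁻¹ * r ^ d ≤ ((V.map Prod.fst) (ball x r)).toReal ∧
          ((V.map Prod.fst) (ball x r)).toReal ≤ C₀ * r ^ d)
    (ρ : ℝ → ℝ) (hρC : ContDiff ℝ 2 ρ) (hρ0 : ∀ r, 0 ≤ ρ r)
    (hρsupp : Function.support ρ ⊆ Icc 0 1)
    (ξ : ℝ → ℝ) (hξC : ContDiff ℝ 1 ξ) (hξ0 : ∀ r, 0 ≤ ξ r)
    (hξsupp : Function.support ξ ⊆ Icc 0 1)
    (hξpos : ∀ r ∈ Ioo (0:ℝ) 1, 0 < ξ r)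
    (β : ℝ) (hβ : β = sInf (ξ '' Icc (C₀ ^ (-2 / (d:ℝ)) / 4) (1/2))) (hβpos : 0 < β)
    (Mρ' : ℝ) (hMρ' : ∀ r, |deriv ρ r| ≤ Mρ')
    (ε γ : ℝ) (hε : ε ∈ Ioo (0:ℝ) 1) (hγ : γ ∈ Ioo (0:ℝ) 1)
    (hγC : γ ≤ (8 * (1 + C₀ ^ (2 / (d:ℝ))))⁻¹)
    (z : EuclideanSpace ℝ (Fin n))
    (hz : ∃ x : EuclideanSpace ℝ (Fin n),
      (∀ r > (0:ℝ), 0 < (V.map Prod.fst) (ball x r)) ∧ dist z x ≤ γ * ε) :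
    ‖-(((∫ y, ε ^ (-(n:ℤ)) * ξ (dist z y / ε) ∂(V.map Prod.fst))⁻¹) •
        (∫ p, p.2 (gradient
          (fun w : EuclideanSpace ℝ (Fin n) => ε ^ (-(n:ℤ)) * ρ (‖w‖ / ε)) (z - p.1)) ∂V))‖ ≤
      β⁻¹ * C₀ ^ 2 * 2 ^ (3 * d + 1) * Mρ' * ε⁻¹ :=
  stmt4_general d hd V hVproj C₀ hC₀ hreg ρ hρC hρsupp ξ hξC hξ0 hξsupp β hβ hβpos Mρ' hMρ' ε γ hε
    hγ hγC z hz
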